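/- arXiv:1102.1088 — 3 statements merged into one kernel-verified Lean document; each statement's English description precedes it below -/
import Mathlib

section
/- In any SMV-algebra (A, τ), if x ⊙ y = 0 then τ(x) ⊙ τ(y) = 0 and τ(x ⊕ y) = τ(x) ⊕ τ(y). -/
/-- An MV-algebra `(A, ⊕, ¬, 0)`. -/
class MV (A : Type*) extends Zero A where
  oplus : A → A → A
  mvneg : A → A
  oplus_assoc : ∀ x y z : A, oplus (oplus x y) z = oplus x (oplus y z)
  oplus_comm : ∀ x y : A, oplus x y = oplus y x
  oplus_zero : ∀ x : A, oplus x 0 = x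
  mvneg_mvneg : ∀ x : A, mvneg (mvneg x) = x
  oplus_top : ∀ x : A, oplus x (mvneg 0) = mvneg 0
  luk : ∀ x y : A, oplus (mvneg (oplus (mvneg x) y)) y = oplus (mvneg (oplus (mvneg y) x)) x

namespace MV

variable {A : Type*} [MV A]

/-- The top element `1 = ¬0`. -/
def top : A := mvneg 0
/-- `x → y := ¬x ⊕ y`. -/
def imp (x y : A) : A := oplus (mvneg x) y
/-- `x ⊙ y := ¬(¬x ⊕ ¬y)`. -/
def odot (x y : A) : A := mvneg (oplus (mvneg x) (mvneg y))
/-- `x ⊖ y := ¬(¬x ⊕ y)`. -/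
def ominus (x y : A) : A := mvneg (oplus (mvneg x) y)
/-- Lattice join `x ∨ y := (x → y) → y`. -/
def mvsup (x y : A) : A := imp (imp x y) y
/-- Lattice meet `x ∧ y := x ⊙ (x → y)`. -/
def mvinf (x y : A) : A := odot x (imp x y)
/-- The lattice order: `x ≤ y` iff `x → y = 1`. -/
def mvle (x y : A) : Prop := imp x y = top
/-- Strict order. -/
def mvlt (x y : A) : Prop := mvle x y ∧ x ≠ y

/-- `(A, τ)` is an SMV-algebra. -/
structure IsSMV (τ : A → A) : Prop where
  map_top : τ top = top
  tau_oplus : ∀ x y : A, τ (oplus x y) = oplus (τ x) (τ (ominus y (odot x y)))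
  map_neg : ∀ x : A, τ (mvneg x) = mvneg (τ x)
  tau_fix : ∀ x y : A, τ (oplus (τ x) (τ y)) = oplus (τ x) (τ y)

/-- `(A, τ)` is a state morphism MV-algebra. -/
def IsSMMV (τ : A → A) : Prop := IsSMV τ ∧ ∀ x y : A, τ (oplus x y) = oplus (τ x) (τ y)

/-- An MV-filter. -/
structure IsFilter (F : Set A) : Prop where
  top_mem : top ∈ F
  mp : ∀ a b : A, a ∈ F → imp a b ∈ F → b ∈ F

/-- A `τ`-filter: an MV-filter closed under `τ`. -/
def IsTauFilter (τ : A → A) (F : Set A) : Prop := IsFilter F ∧ ∀ a ∈ F, τ a ∈ F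

/-- Subdirect irreducibility of an SMV-algebra: there is a minimum nontrivial `τ`-filter. -/
def SubdirIrrSMV (τ : A → A) : Prop :=
  ∃ F : Set A, IsTauFilter τ F ∧ F ≠ {top} ∧
    ∀ G : Set A, IsTauFilter τ G → G ≠ {top} → F ⊆ G

/-- A filter of the subalgebra/subhoop with universe `S`. -/
def IsFilterOn (S F : Set A) : Prop :=
  F ⊆ S ∧ top ∈ F ∧ ∀ a b : A, a ∈ F → b ∈ S → imp a b ∈ F → b ∈ F

/-- Subdirect irreducibility of the subalgebra/subhoop with universe `S`:
there is a minimum nontrivial filter on `S`. -/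
def SubdirIrrOn (S : Set A) : Prop :=
  ∃ F : Set A, IsFilterOn S F ∧ F ≠ {top} ∧
    ∀ G : Set A, IsFilterOn S G → G ≠ {top} → F ⊆ G

/-- The set `F_τ(A) = {a : τ a = 1}`. -/
def tauKernel (τ : A → A) : Set A := {a : A | τ a = top}

/-- Homomorphisms of MV-algebras. -/
structure IsMVHom {A B : Type*} [MV A] [MV B] (f : A → B) : Prop where
  map_oplus : ∀ x y : A, f (oplus x y) = oplus (f x) (f y)
  map_neg : ∀ x : A, f (mvneg x) = mvneg (f x)
  map_zero : f 0 = 0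

end MV

open MV

instance MV.instProd {A B : Type*} [MV A] [MV B] : MV (A × B) where
  oplus x y := (oplus x.1 y.1, oplus x.2 y.2)
  mvneg x := (mvneg x.1, mvneg x.2)
  oplus_assoc x y z := by simp [oplus_assoc]
  oplus_comm x y := by simp [oplus_comm x.1 y.1, oplus_comm x.2 y.2]
  oplus_zero x := by simp [oplus_zero]
  mvneg_mvneg x := by simp [mvneg_mvneg]
  oplus_top x := by simp [oplus_top]
  luk x y := by simp [luk]

instance MV.instPi {I : Type*} {A : I → Type*} [∀ i, MV (A i)] : MV (∀ i, A i) where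
  oplus x y i := oplus (x i) (y i)
  mvneg x i := mvneg (x i)
  oplus_assoc x y z := by funext i; simp [oplus_assoc]
  oplus_comm x y := by funext i; exact oplus_comm _ _
  oplus_zero x := by funext i; exact oplus_zero _
  mvneg_mvneg x := by funext i; exact mvneg_mvneg _
  oplus_top x := by funext i; exact oplus_top _
  luk x y := by funext i; exact luk _ _

/-!
Disjointness `x ⊙ y = 0` says `x ≤ ¬y`. The axiom for `τ (x ⊕ y)` reduces to additivity when
`x ⊙ y = 0`, and it makes `τ` monotone, since `x ≤ z` means `z = x ⊕ (z ⊖ x)`. Monotonicity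
and `τ ¬y = ¬τ y` then give `τ x ≤ ¬τ y`, i.e. `τ x ⊙ τ y = 0`.
-/

namespace MV

variable {A : Type*} [MV A]

theorem zero_oplus (a : A) : oplus 0 a = a := by
  rw [oplus_comm, oplus_zero]

theorem top_oplus (a : A) : oplus top a = top := by
  rw [oplus_comm]
  exact oplus_top a

theorem mvneg_top : mvneg (top : A) = 0 :=
  mvneg_mvneg 0

theorem mvneg_oplus_self (a : A) : oplus (mvneg a) a = top := by
  have h := luk a (top : A)
  rwa [top, oplus_top, mvneg_mvneg, zero_oplus, eq_comm] at h

theorem ominus_zero (a : A) : ominus a 0 = a := by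
  rw [ominus, oplus_zero, mvneg_mvneg]

theorem odot_eq_zero_iff_mvle {x y : A} : odot x y = 0 ↔ mvle x (mvneg y) := by
  rw [odot, mvle, imp, ← mvneg_top, (Function.Involutive.injective mvneg_mvneg).eq_iff]

theorem mvle_oplus_right (x z : A) : mvle x (oplus x z) := by
  rw [mvle, imp, ← oplus_assoc, mvneg_oplus_self, top_oplus]

theorem oplus_ominus_of_mvle {x y : A} (hxy : mvle x y) : oplus x (ominus y x) = y := by
  have h := luk x y
  rw [show mvneg (oplus (mvneg x) y) = 0 by rw [← imp, hxy, mvneg_top], zero_oplus] at h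
  rw [ominus, oplus_comm, ← h]

namespace IsSMV

variable {τ : A → A}

theorem map_oplus_of_odot_eq_zero (h : IsSMV τ) {x y : A} (hxy : odot x y = 0) :
    τ (oplus x y) = oplus (τ x) (τ y) := by
  rw [h.tau_oplus, hxy, ominus_zero]

theorem mvle_map (h : IsSMV τ) {x y : A} (hxy : mvle x y) : mvle (τ x) (τ y) := by
  rw [← oplus_ominus_of_mvle hxy, h.tau_oplus]
  exact mvle_oplus_right _ _

theorem odot_map_eq_zero (h : IsSMV τ) {x y : A} (hxy : odot x y = 0) :
    odot (τ x) (τ y) = 0 := by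
  rw [odot_eq_zero_iff_mvle, ← h.map_neg]
  exact h.mvle_map (odot_eq_zero_iff_mvle.mp hxy)

end IsSMV

end MV

/-- In any SMV-algebra `(A, τ)`, if `x ⊙ y = 0` then
`τ x ⊙ τ y = 0` and `τ (x ⊕ y) = τ x ⊕ τ y`. -/
theorem smv_additive_on_disjoint {A : Type*} [MV A] (τ : A → A) (h : IsSMV τ)
    (x y : A) (hxy : odot x y = 0) :
    odot (τ x) (τ y) = 0 ∧ τ (oplus x y) = oplus (τ x) (τ y) :=
  ⟨h.odot_map_eq_zero hxy, h.map_oplus_of_odot_eq_zero hxy⟩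
end

section
/- An SMV-algebra (A, τ) is an SMMV-algebra if and only if it satisfies τ(x ∨ y) = τ(x) ∨ τ(y), and also if and only if it satisfies τ(x ∧ y) = τ(x) ∧ τ(y). -/
open MV

/-!
Join and meet are De Morgan dual and `τ` commutes with `¬`, so `τ` preserves one iff it preserves
the other; and a `τ` additive on `⊕` preserves joins, which are built from `⊕` and `¬`. Conversely,
the SMV axiom reads `τ(x ⊕ y) = τx ⊕ τ(y ∧ ¬x)`, which is `τx ⊕ (τy ∧ ¬τx)` when `τ` preserves
meets. The same axiom applied to `τx, τy`, with `τ` idempotent and fixing `τx ⊕ τy`, shows that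
`τx ⊕ (τy ∧ ¬τx) = τx ⊕ τy`.
-/

namespace MV

variable {A : Type*} [MV A]

lemma mvinf_eq_mvneg_mvsup (x y : A) :
    mvinf x y = mvneg (mvsup (mvneg x) (mvneg y)) := by
  unfold mvinf mvsup odot imp
  rw [mvneg_mvneg]
  congr 1
  calc oplus (mvneg x) (mvneg (oplus (mvneg x) y))
      = oplus (mvneg (oplus (mvneg (mvneg y)) (mvneg x))) (mvneg x) := by
        rw [oplus_comm, mvneg_mvneg, oplus_comm y (mvneg x)]
    _ = oplus (mvneg (oplus (mvneg (mvneg x)) (mvneg y))) (mvneg y) :=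
        (luk (mvneg x) (mvneg y)).symm
    _ = oplus (mvneg (oplus x (mvneg y))) (mvneg y) := by rw [mvneg_mvneg]

lemma mvsup_eq_mvneg_mvinf (x y : A) :
    mvsup x y = mvneg (mvinf (mvneg x) (mvneg y)) := by
  rw [mvinf_eq_mvneg_mvsup, mvneg_mvneg, mvneg_mvneg, mvneg_mvneg]

lemma ominus_odot_eq_mvinf_mvneg (x y : A) :
    ominus y (odot x y) = mvinf y (mvneg x) := by
  simp only [ominus, odot, mvinf, imp]
  rw [oplus_comm (mvneg x) (mvneg y)]

section MapNeg

variable {τ : A → A} (hneg : ∀ x : A, τ (mvneg x) = mvneg (τ x))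
include hneg

lemma map_mvsup_of_map_oplus (hadd : ∀ x y : A, τ (oplus x y) = oplus (τ x) (τ y)) (x y : A) :
    τ (mvsup x y) = mvsup (τ x) (τ y) := by
  simp only [mvsup, imp, hadd, hneg]

lemma map_mvsup_iff_map_mvinf :
    (∀ x y : A, τ (mvsup x y) = mvsup (τ x) (τ y)) ↔
      ∀ x y : A, τ (mvinf x y) = mvinf (τ x) (τ y) := by
  constructor
  · intro hsup x y
    rw [mvinf_eq_mvneg_mvsup, hneg, hsup, hneg, hneg, mvinf_eq_mvneg_mvsup (τ x)]
  · intro hinf x y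
    rw [mvsup_eq_mvneg_mvinf, hneg, hinf, hneg, hneg, mvsup_eq_mvneg_mvinf (τ x)]

end MapNeg

namespace IsSMV

variable {τ : A → A} (h : IsSMV τ)
include h

lemma map_zero : τ 0 = 0 := by
  have hneg_top := h.map_neg top
  rwa [h.map_top, top, mvneg_mvneg] at hneg_top

lemma map_map (x : A) : τ (τ x) = τ x := by
  simpa only [h.map_zero, oplus_zero] using h.tau_fix x 0

lemma map_oplus_of_map_mvinf (hinf : ∀ x y : A, τ (mvinf x y) = mvinf (τ x) (τ y)) (x y : A) :
    τ (oplus x y) = oplus (τ x) (τ y) := by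
  have hfix := h.tau_oplus (τ x) (τ y)
  rw [h.tau_fix, ominus_odot_eq_mvinf_mvneg, hinf, h.map_map, h.map_map, h.map_neg,
    h.map_map] at hfix
  rw [h.tau_oplus, ominus_odot_eq_mvinf_mvneg, hinf, h.map_neg, hfix]

end IsSMV

end MV

/-- An SMV-algebra `(A, τ)` is an SMMV-algebra iff `τ` preserves joins,
and also iff `τ` preserves meets. -/
theorem smmv_iff_sup_iff_inf {A : Type*} [MV A] (τ : A → A) (h : IsSMV τ) :
    (IsSMMV τ ↔ ∀ x y : A, τ (mvsup x y) = mvsup (τ x) (τ y)) ∧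
    (IsSMMV τ ↔ ∀ x y : A, τ (mvinf x y) = mvinf (τ x) (τ y)) := by
  have hsup_iff_inf := map_mvsup_iff_map_mvinf h.map_neg
  have hsmmv_iff_inf : IsSMMV τ ↔ ∀ x y : A, τ (mvinf x y) = mvinf (τ x) (τ y) :=
    ⟨fun hsmmv => hsup_iff_inf.1 (map_mvsup_of_map_oplus h.map_neg hsmmv.2),
      fun hinf => ⟨h, h.map_oplus_of_map_mvinf hinf⟩⟩
  exact ⟨hsmmv_iff_inf.trans hsup_iff_inf.symm, hsmmv_iff_inf⟩
end

section
/- For elements a¹ᵢ, a²ᵢ, b¹, b² of [0,1] and any SMMV-term t(x₁,…,xₙ), the equation t((a₁¹,a₁²),…,(aₙ¹,aₙ²)) = (b¹,b²) holds in D([0,1]_MV) if and only if tⁱ(a₁¹,a₁²,…,aₙ¹,aₙ²) = bⁱ holds in [0,1]_MV for i = 1,2, where the translation t ↦ (t¹, t²) is defined recursively by: xᵢ ↦ (xᵢ¹, xᵢ²); 0 ↦ (0,0); (¬s)ⁱ = ¬sⁱ; (s ⊕ u)ⁱ = sⁱ ⊕ uⁱ; and (τ(s))¹ = (τ(s))²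 = s¹. -/
open MV

/-- Terms in the language of SMMV-algebras. -/
inductive SMMVTerm where
  | var : ℕ → SMMVTerm
  | zero : SMMVTerm
  | neg : SMMVTerm → SMMVTerm
  | oplus : SMMVTerm → SMMVTerm → SMMVTerm
  | tau : SMMVTerm → SMMVTerm

/-- Terms in the language of MV-algebras. -/
inductive MVTerm where
  | var : ℕ → MVTerm
  | zero : MVTerm
  | neg : MVTerm → MVTerm
  | oplus : MVTerm → MVTerm → MVTerm

/-- Truncated addition on `[0,1]_MV`. -/
noncomputable def rOplus (r s : ℝ) : ℝ := min (r + s) 1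
/-- Negation on `[0,1]_MV`. -/
def rNeg (r : ℝ) : ℝ := 1 - r

/-- Evaluation of MV-terms in the standard MV-algebra `[0,1]_MV`. -/
noncomputable def evalMV (σ : ℕ → ℝ) : MVTerm → ℝ
  | .var n => σ n
  | .zero => 0
  | .neg t => rNeg (evalMV σ t)
  | .oplus s u => rOplus (evalMV σ s) (evalMV σ u)

/-- Evaluation of SMMV-terms in `D([0,1]_MV)`: operations are componentwise and
`τ (a, b) = (a, a)`. -/
noncomputable def evalD (σ : ℕ → ℝ × ℝ) : SMMVTerm → ℝ × ℝ
  | .var n => σ n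
  | .zero => (0, 0)
  | .neg t => (rNeg (evalD σ t).1, rNeg (evalD σ t).2)
  | .oplus s u => (rOplus (evalD σ s).1 (evalD σ u).1, rOplus (evalD σ s).2 (evalD σ u).2)
  | .tau t => ((evalD σ t).1, (evalD σ t).1)

/-- The translation `t ↦ (t¹, t²)`: variable `xᵢ` maps to `(xᵢ¹, xᵢ²)` (coded as
variables `2i` and `2i+1`), `0 ↦ (0,0)`, `(¬s)ⁱ = ¬sⁱ`, `(s ⊕ u)ⁱ = sⁱ ⊕ uⁱ`, and
`(τ s)¹ = (τ s)² = s¹`. -/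
def trTerm : SMMVTerm → MVTerm × MVTerm
  | .var n => (.var (2 * n), .var (2 * n + 1))
  | .zero => (.zero, .zero)
  | .neg t => (.neg (trTerm t).1, .neg (trTerm t).2)
  | .oplus s u => (.oplus (trTerm s).1 (trTerm u).1, .oplus (trTerm s).2 (trTerm u).2)
  | .tau t => ((trTerm t).1, (trTerm t).1)

theorem evalD_eq_evalMV_trTerm (σ1 σ2 : ℕ → ℝ) (t : SMMVTerm) :
    evalD (fun n => (σ1 n, σ2 n)) t =
      (evalMV (fun m => if m % 2 = 0 then σ1 (m / 2) else σ2 (m / 2)) (trTerm t).1,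
       evalMV (fun m => if m % 2 = 0 then σ1 (m / 2) else σ2 (m / 2)) (trTerm t).2) := by
  induction t with
  | var n =>
    have hl : (2 * n) % 2 = 0 ∧ 2 * n / 2 = n := by omega
    have hr : (2 * n + 1) % 2 ≠ 0 ∧ (2 * n + 1) / 2 = n := by omega
    simp only [evalD, trTerm, evalMV, hl, hr, if_true, if_false]
  | zero => rfl
  | neg t ih => simp only [evalD, trTerm, evalMV, ih]
  | oplus s u ihs ihu => simp only [evalD, trTerm, evalMV, ihs, ihu]
  | tau t ih => simp only [evalD, trTerm, ih]

theorem diagonal_term_translation_general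
    (σ1 σ2 : ℕ → ℝ)
    (b1 b2 : ℝ)
    (t : SMMVTerm) :
    evalD (fun n => (σ1 n, σ2 n)) t = (b1, b2) ↔
      (evalMV (fun m => if m % 2 = 0 then σ1 (m / 2) else σ2 (m / 2)) (trTerm t).1 = b1 ∧
       evalMV (fun m => if m % 2 = 0 then σ1 (m / 2) else σ2 (m / 2)) (trTerm t).2 = b2) := by
  rw [evalD_eq_evalMV_trTerm, Prod.ext_iff]

/-- for elements `aᵢ¹, aᵢ², b¹, b²` of `[0,1]` and any SMMV-term
`t`, the equation `t((a₁¹,a₁²),…) = (b¹,b²)` holds in `D([0,1]_MV)` iff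
`tⁱ(a₁¹,a₁²,…) = bⁱ` holds in `[0,1]_MV` for `i = 1, 2`. -/
theorem diagonal_term_translation
    (σ1 σ2 : ℕ → ℝ) (hσ1 : ∀ n, σ1 n ∈ Set.Icc (0:ℝ) 1)
    (hσ2 : ∀ n, σ2 n ∈ Set.Icc (0:ℝ) 1)
    (b1 b2 : ℝ) (hb1 : b1 ∈ Set.Icc (0:ℝ) 1) (hb2 : b2 ∈ Set.Icc (0:ℝ) 1)
    (t : SMMVTerm) :
    evalD (fun n => (σ1 n, σ2 n)) t = (b1, b2) ↔
      (evalMV (fun m => if m % 2 = 0 then σ1 (m / 2) else σ2 (m / 2)) (trTerm t).1 = b1 ∧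
       evalMV (fun m => if m % 2 = 0 then σ1 (m / 2) else σ2 (m / 2)) (trTerm t).2 = b2) :=
  diagonal_term_translation_general σ1 σ2 b1 b2 t
end
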